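/- Local geodesics are minimizing in CAT(0) spaces: Let U be a geodesic metric space satisfying the CAT(0) comparison (every pair of points of U is joined by a geodesic). Let ℓ ≥ 0 and let γ : ℝ → U be a local geodesic on [0,ℓ]: for every t ∈ [0,ℓ] there is ε > 0 such that dist(γ(s), γ(s')) = |s − s'| for all s, s' ∈ [0,ℓ] with |s − t| < ε and |s' − t| < ε. Then γ is length-minimizing on [0,ℓ]: dist(γ(s), γ(t)) = |s − t| for all s, t ∈ [0,ℓ]. -/
import Mathlib


/-- Comparison angle (model angle for curvature `0`) at `p` between `x` and `y`. -/
noncomputable def cmpAngle {X : Type*} [MetricSpace X] (p x y : X) : ℝ :=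
  Real.arccos ((dist p x ^ 2 + dist p y ^ 2 - dist x y ^ 2) / (2 * dist p x * dist p y))

/-- The CBB(0) four-point comparison: curvature `≥ 0` in the sense of Alexandrov. -/
def CBB0Cmp (X : Type*) [MetricSpace X] : Prop :=
  ∀ p x₁ x₂ x₃ : X, p ≠ x₁ → p ≠ x₂ → p ≠ x₃ →
    cmpAngle p x₁ x₂ + cmpAngle p x₂ x₃ + cmpAngle p x₃ x₁ ≤ 2 * Real.pi

/-- The CAT(0) four-point comparison. -/
def CAT0Cmp (X : Type*) [MetricSpace X] : Prop :=
  ∀ p₁ p₂ x₁ x₂ : X, p₁ ≠ p₂ → p₁ ≠ x₁ → p₁ ≠ x₂ → p₂ ≠ x₁ → p₂ ≠ x₂ →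
    cmpAngle p₁ x₁ x₂ ≤ cmpAngle p₁ p₂ x₁ + cmpAngle p₁ p₂ x₂ ∨
    cmpAngle p₂ x₁ x₂ ≤ cmpAngle p₂ p₁ x₁ + cmpAngle p₂ p₁ x₂

/-- Midpoint characterization of the length condition (for complete spaces). -/
def LengthMid (X : Type*) [MetricSpace X] : Prop :=
  ∀ x y : X, ∀ ε : ℝ, 0 < ε → ∃ z : X,
    dist x z ≤ dist x y / 2 + ε ∧ dist z y ≤ dist x y / 2 + ε

/-- A geodesic from `p` to `q`, affinely parametrized by `[0,1]`. -/
def IsGeodesicP {X : Type*} [MetricSpace X] (γ : ℝ → X) (p q : X) : Prop :=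
  γ 0 = p ∧ γ 1 = q ∧
    ∀ s ∈ Set.Icc (0:ℝ) 1, ∀ t ∈ Set.Icc (0:ℝ) 1, dist (γ s) (γ t) = |s - t| * dist p q

/-- A metrically convex subset: together with any two points it contains
every point lying between them. -/
def MConvexSet {X : Type*} [MetricSpace X] (K : Set X) : Prop :=
  ∀ x ∈ K, ∀ y ∈ K, ∀ z : X, dist x z + dist z y = dist x y → z ∈ K

lemma quot_le_one {X : Type*} [MetricSpace X] {p x y : X} (hx : p ≠ x) (hy : p ≠ y) :
    -1 ≤ (dist p x ^ 2 + dist p y ^ 2 - dist x y ^ 2) / (2 * dist p x * dist p y) ∧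
    (dist p x ^ 2 + dist p y ^ 2 - dist x y ^ 2) / (2 * dist p x * dist p y) ≤ 1 := by
  have hu : 0 < dist p x := dist_pos.2 hx
  have hv : 0 < dist p y := dist_pos.2 hy
  have h1 : dist x y ≤ dist x p + dist p y := dist_triangle _ _ _
  have h1' : dist x p = dist p x := dist_comm _ _
  have h2 : |dist x p - dist y p| ≤ dist x y := abs_dist_sub_le _ _ _
  have h2' := abs_le.mp h2
  have h2a := h2'.1
  have h2b := h2'.2
  rw [h1'] at h1
  rw [h1', dist_comm y p] at h2a h2b
  have hxy : (0:ℝ) ≤ dist x y := dist_nonneg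
  constructor
  · rw [le_div_iff₀ (by positivity)]
    nlinarith
  · rw [div_le_one (by positivity)]
    nlinarith

lemma cos_cmpAngle {X : Type*} [MetricSpace X] {p x y : X} (hx : p ≠ x) (hy : p ≠ y) :
    Real.cos (cmpAngle p x y)
      = (dist p x ^ 2 + dist p y ^ 2 - dist x y ^ 2) / (2 * dist p x * dist p y) :=
  Real.cos_arccos (quot_le_one hx hy).1 (quot_le_one hx hy).2

set_option maxHeartbeats 1000000 in
lemma key_ineq {X : Type*} [MetricSpace X] (hcat : CAT0Cmp X)
    (p m z₁ z₂ : X) (a : ℝ) (ha : 0 < a)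
    (h1 : dist m z₁ = a) (h2 : dist m z₂ = a) (h12 : dist z₁ z₂ = 2 * a)
    (har : a < dist p m) :
    dist p m ^ 2 ≤ (dist p z₁ ^ 2 + dist p z₂ ^ 2) / 2 - a ^ 2 := by
  set r := dist p m with hr
  set f₁ := dist p z₁ with hf₁
  set f₂ := dist p z₂ with hf₂
  have hr0 : 0 < r := ha.trans har
  have hf₁0 : 0 < f₁ := by
    have ht := dist_triangle p z₁ m
    rw [dist_comm z₁ m, h1] at ht
    linarith
  have hf₂0 : 0 < f₂ := by
    have ht := dist_triangle p z₂ m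
    rw [dist_comm z₂ m, h2] at ht
    linarith
  have hmp : m ≠ p := by rw [← dist_pos, dist_comm]; exact hr0
  have hpm : p ≠ m := fun h => hmp h.symm
  have hmz₁ : m ≠ z₁ := by rw [← dist_pos, h1]; exact ha
  have hmz₂ : m ≠ z₂ := by rw [← dist_pos, h2]; exact ha
  have hpz₁ : p ≠ z₁ := by rw [← dist_pos]; exact hf₁0
  have hpz₂ : p ≠ z₂ := by rw [← dist_pos]; exact hf₂0
  rcases hcat m p z₁ z₂ hmp hmz₁ hmz₂ hpz₁ hpz₂ with hA | hB
  · -- case A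
    have hang : cmpAngle m z₁ z₂ = Real.pi := by
      unfold cmpAngle
      rw [h1, h2, h12]
      have he : (a ^ 2 + a ^ 2 - (2*a) ^ 2) / (2 * a * a) = -1 := by
        field_simp; ring
      rw [he, Real.arccos_neg_one]
    rw [hang] at hA
    set θ₁ := cmpAngle m p z₁ with hth1
    set θ₂ := cmpAngle m p z₂ with hth2
    have hθ₁pi : θ₁ ≤ Real.pi := Real.arccos_le_pi _
    have hθ₂pi : θ₂ ≤ Real.pi := Real.arccos_le_pi _
    have hθ₁0 : 0 ≤ θ₁ := Real.arccos_nonneg _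
    have hcos₂ : Real.cos θ₂ ≤ Real.cos (Real.pi - θ₁) := by
      apply Real.cos_le_cos_of_nonneg_of_le_pi (by linarith) hθ₂pi
      linarith
    rw [Real.cos_pi_sub] at hcos₂
    have hc₁ : Real.cos θ₁
        = (dist m p ^ 2 + dist m z₁ ^ 2 - dist p z₁ ^ 2) / (2 * dist m p * dist m z₁) :=
      cos_cmpAngle hmp hmz₁
    have hc₂ : Real.cos θ₂
        = (dist m p ^ 2 + dist m z₂ ^ 2 - dist p z₂ ^ 2) / (2 * dist m p * dist m z₂) :=
      cos_cmpAngle hmp hmz₂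
    rw [dist_comm m p, h1] at hc₁
    rw [dist_comm m p, h2] at hc₂
    rw [hc₁, hc₂] at hcos₂
    have hden : (0:ℝ) < 2 * dist p m * a := by positivity
    have hsum : (dist p m ^ 2 + a ^ 2 - dist p z₁ ^ 2) / (2 * dist p m * a)
        + (dist p m ^ 2 + a ^ 2 - dist p z₂ ^ 2) / (2 * dist p m * a) ≤ 0 := by linarith
    have h' := mul_le_mul_of_nonneg_right hsum hden.le
    rw [add_mul, div_mul_cancel₀ _ hden.ne', div_mul_cancel₀ _ hden.ne', zero_mul] at h'
    have hrd : dist p m = r := rfl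
    rw [hrd] at h'
    have hfd₁ : dist p z₁ = f₁ := rfl
    have hfd₂ : dist p z₂ = f₂ := rfl
    rw [hfd₁, hfd₂] at h'
    linarith
  · -- case B
    have e₁ : cmpAngle p m z₁ = Real.arccos ((r^2 + f₁^2 - a^2) / (2 * r * f₁)) := by
      unfold cmpAngle; rw [h1]
    have e₂ : cmpAngle p m z₂ = Real.arccos ((r^2 + f₂^2 - a^2) / (2 * r * f₂)) := by
      unfold cmpAngle; rw [h2]
    have eΘ : cmpAngle p z₁ z₂ = Real.arccos ((f₁^2 + f₂^2 - (2*a)^2) / (2 * f₁ * f₂)) := by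
      unfold cmpAngle; rw [h12]
    set P₁ := (r^2 + f₁^2 - a^2) / (2 * r * f₁) with hP₁
    set P₂ := (r^2 + f₂^2 - a^2) / (2 * r * f₂) with hP₂
    set Q := (f₁^2 + f₂^2 - (2*a)^2) / (2 * f₁ * f₂) with hQ
    have hb₁ := quot_le_one hpm hpz₁
    have hb₂ := quot_le_one hpm hpz₂
    have hbΘ := quot_le_one hpz₁ hpz₂
    rw [h1] at hb₁
    rw [h2] at hb₂
    rw [h12] at hbΘ
    have hP₁0 : 0 ≤ P₁ := by
      rw [hP₁]
      apply div_nonneg _ (by positivity)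
      nlinarith
    have hP₂0 : 0 ≤ P₂ := by
      rw [hP₂]
      apply div_nonneg _ (by positivity)
      nlinarith
    have hθ₁half : cmpAngle p m z₁ ≤ Real.pi / 2 := by
      rw [e₁]
      exact Real.arccos_le_pi_div_two.2 hP₁0
    have hθ₂half : cmpAngle p m z₂ ≤ Real.pi / 2 := by
      rw [e₂]
      exact Real.arccos_le_pi_div_two.2 hP₂0
    have hmono : Real.cos (cmpAngle p m z₁ + cmpAngle p m z₂) ≤ Real.cos (cmpAngle p z₁ z₂) := by
      apply Real.cos_le_cos_of_nonneg_of_le_pi (Real.arccos_nonneg _) (by linarith) hB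
    rw [Real.cos_add, eΘ, e₁, e₂, Real.cos_arccos hb₁.1 hb₁.2, Real.cos_arccos hb₂.1 hb₂.2,
      Real.cos_arccos hbΘ.1 hbΘ.2, Real.sin_arccos, Real.sin_arccos] at hmono
    -- now hmono : P₁ * P₂ - √(1-P₁^2) * √(1-P₂^2) ≤ Q
    set s₁ := Real.sqrt (1 - P₁^2) with hs₁
    set s₂ := Real.sqrt (1 - P₂^2) with hs₂
    have hs₁0 : 0 ≤ s₁ := Real.sqrt_nonneg _
    have hs₂0 : 0 ≤ s₂ := Real.sqrt_nonneg _
    have hs₁sq : s₁^2 = 1 - P₁^2 := Real.sq_sqrt (by nlinarith [hb₁.1, hb₁.2])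
    have hs₂sq : s₂^2 = 1 - P₂^2 := Real.sq_sqrt (by nlinarith [hb₂.1, hb₂.2])
    -- clear denominators
    set y₁ := f₁ * s₁ with hy₁
    set y₂ := f₂ * s₂ with hy₂
    have hy₁0 : 0 ≤ y₁ := by positivity
    have hy₂0 : 0 ≤ y₂ := by positivity
    have A1 : 4*r^2*y₁^2 = 4*r^2*f₁^2 - (r^2 + f₁^2 - a^2)^2 := by
      have hfP : f₁^2 * P₁^2 = (r^2 + f₁^2 - a^2)^2 / (4*r^2) := by
        rw [hP₁]; field_simp; ring
      have : y₁^2 = f₁^2 - f₁^2 * P₁^2 := by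
        rw [hy₁, mul_pow, hs₁sq]; ring
      rw [this, hfP]; field_simp
    have A2 : 4*r^2*y₂^2 = 4*r^2*f₂^2 - (r^2 + f₂^2 - a^2)^2 := by
      have hfP : f₂^2 * P₂^2 = (r^2 + f₂^2 - a^2)^2 / (4*r^2) := by
        rw [hP₂]; field_simp; ring
      have : y₂^2 = f₂^2 - f₂^2 * P₂^2 := by
        rw [hy₂, mul_pow, hs₂sq]; ring
      rw [this, hfP]; field_simp
    have hC : (0:ℝ) < 4*r^2*f₁*f₂ := by positivity
    have h3 := mul_le_mul_of_nonneg_left hmono hC.le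
    rw [mul_sub] at h3
    have hCP : (4*r^2*f₁*f₂) * (P₁*P₂) = (r^2 + f₁^2 - a^2) * (r^2 + f₂^2 - a^2) := by
      rw [hP₁, hP₂]; field_simp; ring
    have hCs : (4*r^2*f₁*f₂) * (s₁*s₂) = 4*r^2*(y₁*y₂) := by
      rw [hy₁, hy₂]; ring
    have hCQ : (4*r^2*f₁*f₂) * Q = 2*r^2*(f₁^2 + f₂^2 - 4*a^2) := by
      rw [hQ]; field_simp; ring
    rw [hCP, hCs, hCQ] at h3
    have hyy : (0:ℝ) ≤ 4*r^2*(y₁ - y₂)^2 := by positivity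
    have hkey : (2*r^2 - (f₁^2 + f₂^2) + 2*a^2)^2 ≤ 0 := by linarith [A1, A2, h3, hyy, sq_nonneg (r^2 + f₁^2 - a^2 + (r^2 + f₂^2 - a^2))]
    have h0 : 2*r^2 - (f₁^2 + f₂^2) + 2*a^2 = 0 := by
      have := le_antisymm hkey (sq_nonneg _)
      exact pow_eq_zero_iff (two_ne_zero) |>.mp this
    linarith

set_option maxHeartbeats 1600000 in
lemma point_side {X : Type*} [MetricSpace X] (hcat : CAT0Cmp X)
    (σ : ℝ → X) (c : ℝ) (hc : 0 ≤ c)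
    (H : ∀ s ∈ Set.Icc (0:ℝ) 1, ∀ t ∈ Set.Icc (0:ℝ) 1, dist (σ s) (σ t) = |s - t| * c)
    (p : X) :
    ∀ t ∈ Set.Icc (0:ℝ) 1,
      dist p (σ t) ^ 2 ≤ (1-t) * dist p (σ 0) ^ 2 + t * dist p (σ 1) ^ 2 - t*(1-t)*c^2 := by
  set u := dist p (σ 0) with hu
  set v := dist p (σ 1) with hv
  set φ : ℝ → ℝ := fun s => dist p (σ s) ^ 2 - ((1-s)*u^2 + s*v^2 - s*(1-s)*c^2) with hφ
  suffices hS : ∀ t ∈ Set.Icc (0:ℝ) 1, φ t ≤ 0 by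
    intro t ht
    have := hS t ht
    simp only [hφ] at this
    linarith
  have h01 : (0:ℝ) ∈ Set.Icc (0:ℝ) 1 := by norm_num
  have h11 : (1:ℝ) ∈ Set.Icc (0:ℝ) 1 := by norm_num
  have hσlip : LipschitzOnWith (Real.toNNReal c) (fun s => dist p (σ s)) (Set.Icc 0 1) := by
    apply LipschitzOnWith.of_dist_le_mul
    intro x hx y hy
    have hd := H x hx y hy
    have h1 : dist (dist p (σ x)) (dist p (σ y)) ≤ dist (σ x) (σ y) := by
      rw [Real.dist_eq]
      have := abs_dist_sub_le (σ x) (σ y) p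
      rw [dist_comm (σ x) p, dist_comm (σ y) p] at this
      exact this
    rw [hd] at h1
    rw [Real.coe_toNNReal c hc, Real.dist_eq]
    calc dist (dist p (σ x)) (dist p (σ y)) ≤ |x - y| * c := h1
    _ = c * |x - y| := by ring
  have hσcont : ContinuousOn (fun s => dist p (σ s)) (Set.Icc 0 1) := hσlip.continuousOn
  have hφcont : ContinuousOn φ (Set.Icc 0 1) := by
    simp only [hφ]
    apply ContinuousOn.sub
    · exact hσcont.pow 2
    · apply Continuous.continuousOn
      continuity
  obtain ⟨tm, htm, hmax⟩ := isCompact_Icc.exists_isMaxOn (Set.nonempty_Icc.mpr zero_le_one) hφcont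
  set M := φ tm with hM
  have hφ0 : φ 0 = 0 := by
    simp only [hφ]
    have : dist p (σ 0) = u := rfl
    rw [this]; ring
  have hφ1 : φ 1 = 0 := by
    simp only [hφ]
    have : dist p (σ 1) = v := rfl
    rw [this]; ring
  rcases le_or_gt M 0 with hM0 | hM0
  · intro t ht; exact le_trans (hmax ht) hM0
  exfalso
  have hcuv : c ≤ u + v := by
    have hd := H 0 h01 1 h11
    have := dist_triangle (σ 0) p (σ 1)
    rw [hd] at this
    rw [dist_comm (σ 0) p] at this
    simp only [← hu, ← hv] at this
    norm_num at this
    linarith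
  rcases eq_or_lt_of_le hc with hc0 | hc0
  · -- c = 0
    have hvu : v = u := by
      have hd := H 0 h01 1 h11
      rw [← hc0, mul_zero] at hd
      have : σ 1 = σ 0 := by rwa [← dist_eq_zero, dist_comm]
      rw [hv, this, ← hu]
    have : φ tm ≤ 0 := by
      simp only [hφ, hvu, ← hc0]
      have hle : dist p (σ tm) ≤ u := by
        have hd := H tm htm 0 h01
        rw [← hc0, mul_zero] at hd
        have : σ tm = σ 0 := by rwa [← dist_eq_zero]
        rw [this, ← hu]
      have h0 : 0 ≤ dist p (σ tm) := dist_nonneg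
      nlinarith
    linarith
  -- main case : 0 < c
  set K := Set.Icc (0:ℝ) 1 ∩ φ ⁻¹' (Set.Ici M) with hK
  have hKclosed : IsClosed K := hφcont.preimage_isClosed_of_isClosed isClosed_Icc isClosed_Ici
  have hKcomp : IsCompact K := isCompact_Icc.of_isClosed_subset hKclosed Set.inter_subset_left
  have hKne : K.Nonempty := ⟨tm, htm, le_refl M⟩
  set tS := sSup K with htS
  have htSK : tS ∈ K := hKcomp.sSup_mem hKne
  have htSIcc : tS ∈ Set.Icc (0:ℝ) 1 := htSK.1
  have hφtS : φ tS = M := le_antisymm (hmax htSIcc) htSK.2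
  have htS0 : 0 < tS := by
    rcases lt_or_eq_of_le htSIcc.1 with h | h
    · exact h
    · exfalso; rw [← h] at hφtS; rw [hφ0] at hφtS; linarith
  have htS1 : tS < 1 := by
    rcases lt_or_eq_of_le htSIcc.2 with h | h
    · exact h
    · exfalso; rw [h] at hφtS; rw [hφ1] at hφtS; linarith
  set r := dist p (σ tS) with hr
  have hr2 : r ^ 2 = M + ((1-tS)*u^2 + tS*v^2 - tS*(1-tS)*c^2) := by
    have : φ tS = r ^ 2 - ((1-tS)*u^2 + tS*v^2 - tS*(1-tS)*c^2) := rfl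
    rw [this] at hφtS
    linarith
  have hgnn : 0 ≤ (1-tS)*u^2 + tS*v^2 - tS*(1-tS)*c^2 := by
    have hu0 : 0 ≤ u := dist_nonneg
    have hv0 : 0 ≤ v := dist_nonneg
    nlinarith [sq_nonneg ((1-tS)*u - tS*v), mul_nonneg (mul_nonneg htS0.le (sub_nonneg.mpr htS1.le)) (mul_nonneg (add_nonneg hu0 hv0) (sub_nonneg.mpr hcuv))]
  have hrsq : 0 < r ^ 2 := by linarith
  have hr0 : 0 < r := by
    rcases lt_or_eq_of_le (dist_nonneg : 0 ≤ r) with h | h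
    · exact h
    · exfalso; rw [← hr] at h; rw [← h] at hrsq; norm_num at hrsq
  set α := min (min (tS/2) ((1-tS)/2)) (r/(2*c)) with hα
  have hα0 : 0 < α := by
    apply lt_min (lt_min (by linarith) (by linarith))
    positivity
  have hαt1 : α ≤ tS/2 := le_trans (min_le_left _ _) (min_le_left _ _)
  have hαt2 : α ≤ (1-tS)/2 := le_trans (min_le_left _ _) (min_le_right _ _)
  have hαr : α ≤ r/(2*c) := min_le_right _ _
  have ht₁Icc : tS - α ∈ Set.Icc (0:ℝ) 1 := by constructor <;> [linarith; linarith]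
  have ht₂Icc : tS + α ∈ Set.Icc (0:ℝ) 1 := by constructor <;> [linarith; linarith]
  have har : α * c < r := by
    have : α * c ≤ (r/(2*c)) * c := mul_le_mul_of_nonneg_right hαr hc
    have he : (r/(2*c)) * c = r/2 := by field_simp
    rw [he] at this
    linarith
  have ha0 : 0 < α * c := by positivity
  have d1 : dist (σ tS) (σ (tS - α)) = α * c := by
    rw [H tS htSIcc (tS - α) ht₁Icc]
    rw [show tS - (tS - α) = α by ring, abs_of_pos hα0]
  have d2 : dist (σ tS) (σ (tS + α)) = α * c := by
    rw [H tS htSIcc (tS + α) ht₂Icc]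
    rw [show tS - (tS + α) = -α by ring, abs_neg, abs_of_pos hα0]
  have d12 : dist (σ (tS - α)) (σ (tS + α)) = 2 * (α * c) := by
    rw [H (tS - α) ht₁Icc (tS + α) ht₂Icc]
    rw [show tS - α - (tS + α) = -(2*α) by ring, abs_neg, abs_of_pos (by linarith)]
    ring
  have happ := key_ineq hcat p (σ tS) (σ (tS - α)) (σ (tS + α)) (α * c) ha0 d1 d2 d12 har
  have hE1 : φ (tS - α) ≤ M := hmax ht₁Icc
  have hE2 : φ (tS + α) < M := by
    have hnot : tS + α ∉ K := by
      intro hmem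
      have : tS + α ≤ tS := le_csSup hKcomp.bddAbove hmem
      linarith
    have : ¬ (M ≤ φ (tS + α)) := fun h => hnot ⟨ht₂Icc, h⟩
    linarith [lt_of_not_ge this]
  have hx1 : φ (tS - α) = dist p (σ (tS - α)) ^ 2
      - ((1-(tS - α))*u^2 + (tS - α)*v^2 - (tS - α)*(1-(tS - α))*c^2) := rfl
  have hx2 : φ (tS + α) = dist p (σ (tS + α)) ^ 2
      - ((1-(tS + α))*u^2 + (tS + α)*v^2 - (tS + α)*(1-(tS + α))*c^2) := rfl
  rw [hx1] at hE1
  rw [hx2] at hE2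
  nlinarith [happ, hE1, hE2, hr2]

set_option maxHeartbeats 1600000 in
theorem local_geodesics_minimize_CAT0 {U : Type*} [MetricSpace U]
    (hgeo : ∀ p q : U, ∃ γ : ℝ → U, IsGeodesicP γ p q)
    (hcat : CAT0Cmp U)
    (ℓ : ℝ) (hℓ : 0 ≤ ℓ) (γ : ℝ → U)
    (hloc : ∀ t ∈ Set.Icc 0 ℓ, ∃ ε > (0:ℝ), ∀ s ∈ Set.Icc 0 ℓ, ∀ s' ∈ Set.Icc 0 ℓ,
      |s - t| < ε → |s' - t| < ε → dist (γ s) (γ s') = |s - s'|) :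
    ∀ s ∈ Set.Icc 0 ℓ, ∀ t ∈ Set.Icc 0 ℓ, dist (γ s) (γ t) = |s - t| := by
  -- γ is 1-Lipschitz on [0, ℓ]
  have hlipm : ∀ s ∈ Set.Icc 0 ℓ, ∀ t ∈ Set.Icc 0 ℓ, s ≤ t → dist (γ s) (γ t) ≤ t - s := by
    intro s hs t ht hst
    set A := {w ∈ Set.Icc s t | dist (γ s) (γ w) ≤ w - s} with hA
    have hsA : s ∈ A := ⟨⟨le_refl s, hst⟩, by simp⟩
    have hAne : A.Nonempty := ⟨s, hsA⟩
    have hAbdd : BddAbove A := ⟨t, fun w hw => hw.1.2⟩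
    set W := sSup A with hW
    have hWs : s ≤ W := le_csSup hAbdd hsA
    have hWt : W ≤ t := csSup_le hAne (fun w hw => hw.1.2)
    have hWIcc : W ∈ Set.Icc 0 ℓ := ⟨le_trans hs.1 hWs, le_trans hWt ht.2⟩
    obtain ⟨ε, hε, hloc'⟩ := hloc W hWIcc
    have hWA : dist (γ s) (γ W) ≤ W - s := by
      obtain ⟨w, hwA, hww⟩ := exists_lt_of_lt_csSup hAne (show W - ε/2 < W by linarith)
      have hwW : w ≤ W := le_csSup hAbdd hwA
      have hwIcc : w ∈ Set.Icc 0 ℓ := ⟨le_trans hs.1 hwA.1.1, le_trans hwA.1.2 ht.2⟩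
      have hdwW : dist (γ w) (γ W) = |w - W| := by
        apply hloc' w hwIcc W hWIcc _ (by simp [hε])
        rw [abs_of_nonpos (by linarith)]; linarith
      calc dist (γ s) (γ W) ≤ dist (γ s) (γ w) + dist (γ w) (γ W) := dist_triangle _ _ _
        _ ≤ (w - s) + |w - W| := add_le_add hwA.2 (le_of_eq hdwW)
        _ = (w - s) + (W - w) := by rw [abs_of_nonpos (by linarith)]; ring
        _ = W - s := by ring
    rcases lt_or_eq_of_le hWt with hWlt | hWeq
    · exfalso
      set w' := min t (W + ε/2) with hw'
      have hWw' : W < w' := lt_min hWlt (by linarith)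
      have hw't : w' ≤ t := min_le_left _ _
      have hw'Icc2 : w' ∈ Set.Icc s t := ⟨by linarith, hw't⟩
      have hw'Icc : w' ∈ Set.Icc 0 ℓ := ⟨le_trans hs.1 hw'Icc2.1, le_trans hw't ht.2⟩
      have hdWw' : dist (γ W) (γ w') = |W - w'| := by
        apply hloc' W hWIcc w' hw'Icc (by simp [hε])
        rw [abs_of_nonneg (by linarith)]
        have : w' ≤ W + ε/2 := min_le_right _ _
        linarith
      have hw'A : w' ∈ A := by
        refine ⟨hw'Icc2, ?_⟩
        calc dist (γ s) (γ w') ≤ dist (γ s) (γ W) + dist (γ W) (γ w') := dist_triangle _ _ _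
          _ ≤ (W - s) + |W - w'| := add_le_add hWA (le_of_eq hdWw')
          _ = (W - s) + (w' - W) := by rw [abs_of_nonpos (by linarith)]; ring
          _ = w' - s := by ring
      have := le_csSup hAbdd hw'A
      linarith
    · rw [← hWeq]; exact hWA
  have hlip : ∀ s ∈ Set.Icc 0 ℓ, ∀ t ∈ Set.Icc 0 ℓ, dist (γ s) (γ t) ≤ |s - t| := by
    intro s hs t ht
    rcases le_total s t with h | h
    · rw [abs_of_nonpos (by linarith)]
      have := hlipm s hs t ht h; linarith
    · rw [dist_comm, abs_of_nonneg (by linarith)]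
      have := hlipm t ht s hs h; linarith
  -- main equality for s ≤ t
  have mainEq : ∀ s ∈ Set.Icc 0 ℓ, ∀ t ∈ Set.Icc 0 ℓ, s ≤ t → dist (γ s) (γ t) = t - s := by
    intro s hs t ht hst
    set B := {w ∈ Set.Icc s ℓ | dist (γ s) (γ w) = w - s} with hB
    have hsB : s ∈ B := ⟨⟨le_refl s, le_trans hst ht.2⟩, by simp⟩
    have hBne : B.Nonempty := ⟨s, hsB⟩
    have hBbdd : BddAbove B := ⟨ℓ, fun w hw => hw.1.2⟩
    set T := sSup B with hT
    have hTs : s ≤ T := le_csSup hBbdd hsB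
    have hTl : T ≤ ℓ := csSup_le hBne (fun w hw => hw.1.2)
    have hTIcc : T ∈ Set.Icc 0 ℓ := ⟨le_trans hs.1 hTs, hTl⟩
    have hTd : dist (γ s) (γ T) = T - s := by
      apply le_antisymm
      · have := hlipm s hs T hTIcc hTs; linarith
      · by_contra hcon
        push_neg at hcon
        set η := (T - s - dist (γ s) (γ T)) / 3 with hη
        have hη0 : 0 < η := by
          simp only [hη]; linarith
        obtain ⟨w, hwB, hww⟩ := exists_lt_of_lt_csSup hBne (show T - η < T by linarith)
        have hwT : w ≤ T := le_csSup hBbdd hwB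
        have hwIcc : w ∈ Set.Icc 0 ℓ := ⟨le_trans hs.1 hwB.1.1, hwB.1.2⟩
        have h1 : dist (γ s) (γ w) ≤ dist (γ s) (γ T) + dist (γ T) (γ w) := dist_triangle _ _ _
        have h2 : dist (γ T) (γ w) ≤ T - w := by
          have := hlipm w hwIcc T hTIcc hwT
          rw [dist_comm]; linarith
        rw [hwB.2] at h1
        linarith
    have hdown : ∀ w ∈ Set.Icc s T, dist (γ s) (γ w) = w - s := by
      intro w hw
      have hwIcc : w ∈ Set.Icc 0 ℓ := ⟨le_trans hs.1 hw.1, le_trans hw.2 hTl⟩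
      apply le_antisymm
      · have := hlipm s hs w hwIcc hw.1; linarith
      · have h1 : dist (γ s) (γ T) ≤ dist (γ s) (γ w) + dist (γ w) (γ T) := dist_triangle _ _ _
        have h2 : dist (γ w) (γ T) ≤ T - w := hlipm w hwIcc T hTIcc hw.2
        rw [hTd] at h1
        linarith
    rcases le_or_gt t T with hcase | hcase
    · exact hdown t ⟨hst, hcase⟩
    exfalso
    have hTless : T < ℓ := lt_of_lt_of_le hcase ht.2
    -- T is strictly bigger than s
    have hsl : s < ℓ := lt_of_le_of_lt hTs hTless
    obtain ⟨ε₀, hε₀, hloc0⟩ := hloc s hs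
    have hsT : s < T := by
      set t₀ := min ℓ (s + ε₀/2) with ht₀
      have hst₀ : s < t₀ := lt_min hsl (by linarith)
      have ht₀Icc : t₀ ∈ Set.Icc 0 ℓ := ⟨le_trans hs.1 hst₀.le, min_le_left _ _⟩
      have ht₀B : t₀ ∈ B := by
        refine ⟨⟨hst₀.le, ht₀Icc.2⟩, ?_⟩
        have hd : dist (γ s) (γ t₀) = |s - t₀| := by
          apply hloc0 s hs t₀ ht₀Icc (by simp [hε₀])
          rw [abs_of_nonneg (by linarith)]
          have : t₀ ≤ s + ε₀/2 := min_le_right _ _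
          linarith
        rw [hd, abs_of_nonpos (by linarith)]; ring
      have := le_csSup hBbdd ht₀B
      linarith
    obtain ⟨ε, hε, hlocT⟩ := hloc T hTIcc
    set δ := min (min (ε/2) ((T - s)/2)) ((ℓ - T)/2) with hδ
    have hδ0 : 0 < δ := by
      apply lt_min (lt_min (by linarith) (by linarith)) (by linarith)
    have hδε : δ ≤ ε/2 := le_trans (min_le_left _ _) (min_le_left _ _)
    have hδT : δ ≤ (T - s)/2 := le_trans (min_le_left _ _) (min_le_right _ _)
    have hδl : δ ≤ (ℓ - T)/2 := min_le_right _ _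
    set σ : ℝ → U := fun w => γ (T - δ + 2*δ*w) with hσ
    have hmem : ∀ w ∈ Set.Icc (0:ℝ) 1, (T - δ + 2*δ*w) ∈ Set.Icc 0 ℓ := by
      intro w hw
      constructor
      · nlinarith [hw.1, hw.2, hs.1]
      · nlinarith [hw.1, hw.2]
    have hnear : ∀ w ∈ Set.Icc (0:ℝ) 1, |T - δ + 2*δ*w - T| < ε := by
      intro w hw
      rw [abs_lt]
      constructor <;> nlinarith [hw.1, hw.2]
    have Hσ : ∀ w₁ ∈ Set.Icc (0:ℝ) 1, ∀ w₂ ∈ Set.Icc (0:ℝ) 1,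
        dist (σ w₁) (σ w₂) = |w₁ - w₂| * (2*δ) := by
      intro w₁ hw₁ w₂ hw₂
      have hd := hlocT (T - δ + 2*δ*w₁) (hmem w₁ hw₁) (T - δ + 2*δ*w₂) (hmem w₂ hw₂)
        (hnear w₁ hw₁) (hnear w₂ hw₂)
      simp only [hσ]
      rw [hd, show T - δ + 2*δ*w₁ - (T - δ + 2*δ*w₂) = (w₁ - w₂) * (2*δ) by ring,
        abs_mul, abs_of_nonneg (by linarith : (0:ℝ) ≤ 2*δ)]
    have hps := point_side hcat σ (2*δ) (by linarith) Hσ (γ s) (1/2) (by norm_num)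
    have e0 : σ 0 = γ (T - δ) := by
      simp only [hσ]
      norm_num
    have eh : σ (1/2 : ℝ) = γ T := by
      simp only [hσ]
      rw [show T - δ + 2*δ*(1/2 : ℝ) = T by ring]
    have e1 : σ 1 = γ (T + δ) := by
      simp only [hσ]
      rw [show T - δ + 2*δ*(1 : ℝ) = T + δ by ring]
    rw [e0, eh, e1] at hps
    have dq : dist (γ s) (γ (T - δ)) = T - δ - s := hdown (T - δ) ⟨by linarith, by linarith⟩
    have hyIcc : T + δ ∈ Set.Icc 0 ℓ := ⟨by linarith [hs.1], by linarith⟩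
    have dy : dist (γ s) (γ (T + δ)) ≤ T + δ - s := hlipm s hs (T + δ) hyIcc (by linarith)
    have dy0 : 0 ≤ dist (γ s) (γ (T + δ)) := dist_nonneg
    rw [hTd, dq] at hps
    have heq2 : T + δ - s ≤ dist (γ s) (γ (T + δ)) := by nlinarith [hps, dy0]
    have hTδB : T + δ ∈ B := ⟨⟨by linarith, hyIcc.2⟩, le_antisymm dy heq2⟩
    have := le_csSup hBbdd hTδB
    linarith
  intro s hs t ht
  rcases le_total s t with h | h
  · rw [mainEq s hs t ht h, abs_of_nonpos (by linarith)]; ring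
  · rw [dist_comm, mainEq t ht s hs h, abs_of_nonneg (by linarith)]
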